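/- Let ρ > 0 be a Lipschitz constant of the Gerstewitz functional Ψ_e on Y. If F is Lipschitzian with constant ℓ > 0 on a neighborhood U of x̄ (with F(x) ≠ ∅ for x ∈ U) and there exists ȳ ∈ Y with g_l(x̄,ȳ) > −∞, then g_l is finite and Lipschitzian on U × Y with constant ρ(1+ℓ) (with respect to the sum norm on X × Y). In particular, the condition g_l(x̄,ȳ) > −∞ can be replaced by ȳ ∈ WMin(F(x̄),K). -/

import Mathlib

/-!
For `y ∈ F x` the Lipschitz inclusion gives `y' ∈ F x'` with `‖y - y'‖ ≤ ℓ‖x - x'‖`, and the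
`ρ`-Lipschitz continuity of `Ψ_e` then yields
`g_l(x', z') ≤ g_l(x, z) + ρ(ℓ‖x - x'‖ + ‖z - z'‖)` in `EReal`. With `(x', z') = (x̄, ȳ)` this
keeps `g_l` above `-∞` on `U`, nonemptiness of `F x` keeps it below `+∞`, and the two
symmetric instances give the Lipschitz bound. A weakly minimal `ȳ` gives `g_l(x̄, ȳ) ≥ 0`:
`Ψ_e(y - ȳ) < 0` would put `ȳ - y` in `K + int K ⊆ int K`.
-/

open Set Topology Metric Pointwise

/-- The Gerstewitz (Tammer) scalarizing functional `Ψ_e(y) = inf {t : y ∈ t•e - K}`. -/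
noncomputable def psiE {Y : Type*} [NormedAddCommGroup Y] [NormedSpace ℝ Y]
    (K : Set Y) (e : Y) (y : Y) : ℝ :=
  sInf {t : ℝ | t • e - y ∈ K}

/-- The lower inner function `g_l(x,z) = inf_{y ∈ F x} Ψ_e (y - z)` (with values in `EReal`). -/
noncomputable def glow {X Y : Type*} [NormedAddCommGroup X] [NormedSpace ℝ X]
    [NormedAddCommGroup Y] [NormedSpace ℝ Y]
    (K : Set Y) (e : Y) (F : X → Set Y) (x : X) (z : Y) : EReal :=
  ⨅ y ∈ F x, (psiE K e (y - z) : EReal)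

/-- The upper inner function `g_{u,x̄}(y) = inf_{ȳ ∈ F x̄} Ψ_e (y - ȳ)`. -/
noncomputable def gupp {X Y : Type*} [NormedAddCommGroup X] [NormedSpace ℝ X]
    [NormedAddCommGroup Y] [NormedSpace ℝ Y]
    (K : Set Y) (e : Y) (F : X → Set Y) (xbar : X) (y : Y) : EReal :=
  ⨅ yb ∈ F xbar, (psiE K e (y - yb) : EReal)

/-- The lower scalarizing functional `f_{l,x̄}(x) = sup_{ȳ ∈ F x̄} g_l(x, ȳ)`. -/
noncomputable def flow {X Y : Type*} [NormedAddCommGroup X] [NormedSpace ℝ X]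
    [NormedAddCommGroup Y] [NormedSpace ℝ Y]
    (K : Set Y) (e : Y) (F : X → Set Y) (xbar : X) (x : X) : EReal :=
  ⨆ yb ∈ F xbar, glow K e F x yb

/-- The upper scalarizing functional `f_{u,x̄}(x) = sup_{y ∈ F x} g_{u,x̄}(y)`. -/
noncomputable def fupp {X Y : Type*} [NormedAddCommGroup X] [NormedSpace ℝ X]
    [NormedAddCommGroup Y] [NormedSpace ℝ Y]
    (K : Set Y) (e : Y) (F : X → Set Y) (xbar : X) (x : X) : EReal :=
  ⨆ y ∈ F x, gupp K e F xbar y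

/-- Weakly minimal elements: `WMin(A,K) = {a ∈ A : (a - int K) ∩ A = ∅}`. -/
def wMinSet {Y : Type*} [NormedAddCommGroup Y] (A K : Set Y) : Set Y :=
  {a ∈ A | ∀ b ∈ A, a - b ∉ interior K}

/-- Weakly maximal elements: `WMax(A,K) = {a ∈ A : (a + int K) ∩ A = ∅}`. -/
def wMaxSet {Y : Type*} [NormedAddCommGroup Y] (A K : Set Y) : Set Y :=
  {a ∈ A | ∀ b ∈ A, b - a ∉ interior K}

/-- Minimal elements: `Min(A,K) = {a ∈ A : (a - K) ∩ A = {a}}`. -/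
def minSet {Y : Type*} [AddGroup Y] (A K : Set Y) : Set Y :=
  {a ∈ A | ∀ b ∈ A, a - b ∈ K → b = a}

section Cone

variable {Y : Type*} [NormedAddCommGroup Y] [NormedSpace ℝ Y] {K : Set Y}

theorem add_mem_of_convex_of_smul_mem (hKcv : Convex ℝ K)
    (hKcone : ∀ t : ℝ, 0 ≤ t → ∀ y ∈ K, t • y ∈ K) {a b : Y} (ha : a ∈ K) (hb : b ∈ K) :
    a + b ∈ K := by
  have hmid : (1 / 2 : ℝ) • a + (1 / 2 : ℝ) • b ∈ K :=
    hKcv ha hb (by norm_num) (by norm_num) (by norm_num)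
  have h2 : (2 : ℝ) • ((1 / 2 : ℝ) • a + (1 / 2 : ℝ) • b) = a + b := by
    rw [smul_add, smul_smul, smul_smul]; norm_num
  simpa only [h2] using hKcone 2 zero_le_two _ hmid

theorem add_mem_interior_of_convex_of_smul_mem (hKcv : Convex ℝ K)
    (hKcone : ∀ t : ℝ, 0 ≤ t → ∀ y ∈ K, t • y ∈ K) {c w : Y} (hc : c ∈ K)
    (hw : w ∈ interior K) : c + w ∈ interior K :=
  interior_mono (image_subset_iff.2 fun _ hu => add_mem_of_convex_of_smul_mem hKcv hKcone hc hu)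
    ((isOpenMap_add_left c).image_interior_subset K ⟨w, hw, rfl⟩)

theorem smul_mem_interior_of_smul_mem (hKcone : ∀ t : ℝ, 0 ≤ t → ∀ y ∈ K, t • y ∈ K)
    {t : ℝ} (ht : 0 < t) {w : Y} (hw : w ∈ interior K) : t • w ∈ interior K :=
  interior_mono (image_subset_iff.2 fun u hu => hKcone t ht.le u hu)
    ((isOpenMap_smul₀ ht.ne').image_interior_subset K ⟨w, hw, rfl⟩)

theorem psiE_nonneg_of_neg_notMem_interior {e : Y} (hKcv : Convex ℝ K)
    (hKcone : ∀ t : ℝ, 0 ≤ t → ∀ y ∈ K, t • y ∈ K) (he : e ∈ interior K) {y : Y}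
    (hy : -y ∉ interior K) : 0 ≤ psiE K e y := by
  by_contra! hneg
  have hne : {t : ℝ | t • e - y ∈ K}.Nonempty := by
    by_contra hempty -- `sInf ∅ = 0` in `ℝ`
    rw [not_nonempty_iff_eq_empty] at hempty
    simp [psiE, hempty] at hneg
  obtain ⟨t, ht, htneg⟩ := exists_lt_of_csInf_lt hne hneg
  have hsum := add_mem_interior_of_convex_of_smul_mem hKcv hKcone ht
    (smul_mem_interior_of_smul_mem hKcone (neg_pos.2 htneg) he)
  exact hy (by simpa only [neg_smul, sub_add_eq_add_sub, add_neg_cancel, zero_sub] using hsum)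

end Cone

theorem EReal.abs_toReal_sub_le_of_le_add {a b : EReal} {c : ℝ} (ha : a ≠ ⊥) (ha' : a ≠ ⊤)
    (hb : b ≠ ⊥) (hb' : b ≠ ⊤) (hab : a ≤ b + c) (hba : b ≤ a + c) :
    |a.toReal - b.toReal| ≤ c := by
  lift a to ℝ using ⟨ha', ha⟩
  lift b to ℝ using ⟨hb', hb⟩
  rw [← EReal.coe_add, EReal.coe_le_coe_iff] at hab hba
  simp only [EReal.toReal_coe]
  exact abs_sub_le_iff.2 ⟨by linarith, by linarith⟩

section Glow

variable {X Y : Type*} [NormedAddCommGroup X] [NormedSpace ℝ X]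
  [NormedAddCommGroup Y] [NormedSpace ℝ Y] {K : Set Y} {e : Y} {F : X → Set Y}

theorem glow_ne_top {x : X} (hx : (F x).Nonempty) (z : Y) : glow K e F x z ≠ ⊤ :=
  let ⟨y, hy⟩ := hx
  ne_top_of_le_ne_top (EReal.coe_ne_top _) (iInf₂_le y hy)

theorem glow_nonneg_of_mem_wMinSet (hKcv : Convex ℝ K)
    (hKcone : ∀ t : ℝ, 0 ≤ t → ∀ y ∈ K, t • y ∈ K) (he : e ∈ interior K) {x : X} {ybar : Y}
    (hybar : ybar ∈ wMinSet (F x) K) : 0 ≤ glow K e F x ybar :=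
  le_iInf₂ fun y hy => EReal.coe_nonneg.2 <|
    psiE_nonneg_of_neg_notMem_interior hKcv hKcone he (by rw [neg_sub]; exact hybar.2 y hy)

theorem glow_le_glow_add_of_subset_add_closedBall {ρ r : ℝ}
    (hψlip : ∀ y y' : Y, |psiE K e y - psiE K e y'| ≤ ρ * ‖y - y'‖) (hρ : 0 ≤ ρ) {x x' : X}
    (hF : F x ⊆ F x' + closedBall (0 : Y) r) (z z' : Y) :
    glow K e F x' z' ≤ glow K e F x z + ((ρ * (r + ‖z - z'‖) : ℝ) : EReal) := by
  rw [← EReal.sub_le_iff_le_add (.inl (EReal.coe_ne_bot _)) (.inl (EReal.coe_ne_top _))]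
  refine le_iInf₂ fun y hy => ?_
  obtain ⟨y', hy', b, hb, rfl⟩ := hF hy
  rw [EReal.sub_le_iff_le_add (.inl (EReal.coe_ne_bot _)) (.inl (EReal.coe_ne_top _)),
    ← EReal.coe_add]
  refine (iInf₂_le y' hy').trans (EReal.coe_le_coe_iff.2 ?_)
  have hb' : ‖b‖ ≤ r := by simpa using hb
  have hdist : ‖(y' - z') - (y' + b - z)‖ ≤ r + ‖z - z'‖ := by
    rw [show (y' - z') - (y' + b - z) = (z - z') - b by abel]
    linarith [norm_sub_le (z - z') b]
  have := (abs_le.1 (hψlip (y' - z') (y' + b - z))).2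
  linarith [mul_le_mul_of_nonneg_left hdist hρ]

end Glow

theorem stmt9_general
    {X Y : Type*} [NormedAddCommGroup X] [NormedSpace ℝ X]
    [NormedAddCommGroup Y] [NormedSpace ℝ Y]
    (K : Set Y) (e : Y) (F : X → Set Y) (xbar : X)
    (hKcv : Convex ℝ K)
    (hKcone : ∀ t : ℝ, 0 ≤ t → ∀ y ∈ K, t • y ∈ K)
    (he : e ∈ interior K)
    (ρ ℓ : ℝ) (hρpos : 0 < ρ) (hℓpos : 0 < ℓ)
    (hψlip : ∀ y y' : Y, |psiE K e y - psiE K e y'| ≤ ρ * ‖y - y'‖)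
    (U : Set X) (hU : U ∈ 𝓝 xbar)
    (hFne : ∀ x ∈ U, (F x).Nonempty)
    (hFlip : ∀ x ∈ U, ∀ x' ∈ U, F x ⊆ F x' + Metric.closedBall (0 : Y) (ℓ * ‖x - x'‖))
    (hfin : (∃ ybar : Y, glow K e F xbar ybar ≠ ⊥) ∨ (wMinSet (F xbar) K).Nonempty) :
    (∀ x ∈ U, ∀ z : Y, glow K e F x z ≠ ⊥ ∧ glow K e F x z ≠ ⊤) ∧
    (∀ x ∈ U, ∀ x' ∈ U, ∀ z z' : Y,
      |(glow K e F x z).toReal - (glow K e F x' z').toReal| ≤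
        ρ * (1 + ℓ) * (‖x - x'‖ + ‖z - z'‖)) := by
  have hxbar : xbar ∈ U := mem_of_mem_nhds hU
  have hcompare := fun x hx x' hx' => glow_le_glow_add_of_subset_add_closedBall hψlip hρpos.le
    (hFlip x hx x' hx')
  obtain ⟨ybar, hybar⟩ : ∃ ybar, glow K e F xbar ybar ≠ ⊥ := hfin.elim id fun ⟨ybar, h⟩ =>
    ⟨ybar, ne_bot_of_le_ne_bot EReal.zero_ne_bot (glow_nonneg_of_mem_wMinSet hKcv hKcone he h)⟩
  have hfinite : ∀ x ∈ U, ∀ z : Y, glow K e F x z ≠ ⊥ ∧ glow K e F x z ≠ ⊤ := by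
    refine fun x hx z => ⟨fun hbot => hybar ?_, glow_ne_top (hFne x hx) z⟩
    simpa [hbot] using hcompare x hx xbar hxbar z ybar
  refine ⟨hfinite, fun x hx x' hx' z z' => ?_⟩
  have hsymm := hcompare x' hx' x hx z' z
  rw [norm_sub_rev x', norm_sub_rev z'] at hsymm
  refine (EReal.abs_toReal_sub_le_of_le_add (hfinite x hx z).1 (hfinite x hx z).2
    (hfinite x' hx' z').1 (hfinite x' hx' z').2 hsymm (hcompare x hx x' hx' z z')).trans ?_
  nlinarith [mul_nonneg hρpos.le (norm_nonneg (x - x')),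
    mul_nonneg (mul_nonneg hρpos.le hℓpos.le) (norm_nonneg (z - z'))]

/-- if F is Lipschitz on a neighborhood U of x̄ and g_l(x̄,ȳ) > -∞ for some ȳ
(in particular if WMin(F(x̄),K) ≠ ∅), then g_l is finite and Lipschitz on U × Y with
constant ρ(1+ℓ), ρ being a Lipschitz constant of Ψ_e. -/
theorem stmt9
    {X Y : Type*} [NormedAddCommGroup X] [NormedSpace ℝ X] [CompleteSpace X]
    [NormedAddCommGroup Y] [NormedSpace ℝ Y] [CompleteSpace Y]
    (K : Set Y) (e : Y) (F : X → Set Y) (Ω : Set X) (xbar : X)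
    (hKcl : IsClosed K) (hKcv : Convex ℝ K)
    (hKcone : ∀ t : ℝ, 0 ≤ t → ∀ y ∈ K, t • y ∈ K)
    (hKpt : K ∩ (-K) = {0})
    (he : e ∈ interior K)
    (hΩne : Ω.Nonempty) (hΩcl : IsClosed Ω)
    (hΩdom : Ω ⊆ interior {x | (F x).Nonempty})
    (hxΩ : xbar ∈ Ω)
    (ρ ℓ : ℝ) (hρpos : 0 < ρ) (hℓpos : 0 < ℓ)
    (hψlip : ∀ y y' : Y, |psiE K e y - psiE K e y'| ≤ ρ * ‖y - y'‖)
    (U : Set X) (hU : U ∈ 𝓝 xbar)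
    (hFne : ∀ x ∈ U, (F x).Nonempty)
    (hFlip : ∀ x ∈ U, ∀ x' ∈ U, F x ⊆ F x' + Metric.closedBall (0 : Y) (ℓ * ‖x - x'‖))
    (hfin : (∃ ybar : Y, glow K e F xbar ybar ≠ ⊥) ∨ (wMinSet (F xbar) K).Nonempty) :
    (∀ x ∈ U, ∀ z : Y, glow K e F x z ≠ ⊥ ∧ glow K e F x z ≠ ⊤) ∧
    (∀ x ∈ U, ∀ x' ∈ U, ∀ z z' : Y,
      |(glow K e F x z).toReal - (glow K e F x' z').toReal| ≤
        ρ * (1 + ℓ) * (‖x - x'‖ + ‖z - z'‖)) :=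
  stmt9_general K e F xbar hKcv hKcone he ρ ℓ hρpos hℓpos hψlip U hU hFne hFlip hfin
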